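/- Let X be an abstract tectonic crater and let π: Y → X be a Galois covering of finite connected graphs. Color each edge e of Y by the color (blue or green) of π(e); then at each vertex v of Y there is exactly one blue (resp. green) edge with source v, and b_Y(v) (resp. g_Y(v)) denotes its target. If b_Y ∘ g_Y = g_Y ∘ b_Y, then Y is an abstract tectonic crater. -/

import Mathlib

/-! # Multigraphs, coverings, voltage assignments

Directed multigraphs (with loops and multiple edges allowed), undirected multigraphs
(encoded à la Serre, as directed graphs with an edge-inversion), morphisms, coverings,
sheet numbers, deck transformation groups, Galois coverings, voltage assignments and
their derived graphs, connectedness, connected components, directed cycle graphs,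
abstract (tectonic) craters and (tectonic) `l`-volcanoes. -/

/-- A directed multigraph. -/
structure Digraph' : Type 1 where
  V : Type
  E : Type
  src : E → V
  tgt : E → V

namespace Digraph'

variable (X : Digraph')

/-- Two vertices are adjacent if some edge goes from the first to the second. -/
def Adj (v w : X.V) : Prop := ∃ e : X.E, X.src e = v ∧ X.tgt e = w

/-- Two vertices lie in the same connected component (of the underlying
undirected graph). -/
def Reach (v w : X.V) : Prop := Relation.EqvGen X.Adj v w

/-- A graph is connected if any two vertices lie in the same connected component. -/
def Connected : Prop := ∀ v w : X.V, X.Reach v w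

/-- The set of vertices of the connected component containing `v`. -/
def ComponentSet (v : X.V) : Set X.V := {w | X.Reach v w}

/-- The number of connected components. -/
noncomputable def NumComponents : ℕ := Nat.card (Quot X.Adj)

/-- The subgraph generated by a set `S` of vertices: its edges are the edges of `X`
having both endpoints in `S`. -/
def induced (S : Set X.V) : Digraph' where
  V := S
  E := {e : X.E // X.src e ∈ S ∧ X.tgt e ∈ S}
  src e := ⟨X.src e.1, e.2.1⟩
  tgt e := ⟨X.tgt e.1, e.2.2⟩

end Digraph'

/-- A morphism of directed multigraphs. -/
structure DigraphHom (Y X : Digraph') where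
  onV : Y.V → X.V
  onE : Y.E → X.E
  map_src : ∀ e, X.src (onE e) = onV (Y.src e)
  map_tgt : ∀ e, X.tgt (onE e) = onV (Y.tgt e)

namespace DigraphHom

/-- The identity morphism. -/
def id (X : Digraph') : DigraphHom X X :=
  ⟨fun v => v, fun e => e, fun _ => rfl, fun _ => rfl⟩

/-- Composition of morphisms of directed multigraphs. -/
def comp {Z Y X : Digraph'} (g : DigraphHom Y X) (f : DigraphHom Z Y) :
    DigraphHom Z X where
  onV := g.onV ∘ f.onV
  onE := g.onE ∘ f.onE
  map_src e := by simp only [Function.comp_apply, g.map_src, f.map_src]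
  map_tgt e := by simp only [Function.comp_apply, g.map_tgt, f.map_tgt]

end DigraphHom

/-- A covering of directed multigraphs: a surjective morphism which is a local
bijection (it restricts to a bijection on the edges emanating from, respectively
arriving at, each given vertex). -/
def IsGraphCovering {Y X : Digraph'} (f : DigraphHom Y X) : Prop :=
  Function.Surjective f.onV ∧
    (∀ v : Y.V, Set.BijOn f.onE {e | Y.src e = v} {e | X.src e = f.onV v}) ∧
    (∀ v : Y.V, Set.BijOn f.onE {e | Y.tgt e = v} {e | X.tgt e = f.onV v})

/-- A morphism of graphs is `d`-sheeted if every vertex downstairs has exactly `d`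
preimages. -/
def IsSheeted {Y X : Digraph'} (f : DigraphHom Y X) (d : ℕ) : Prop :=
  ∀ x : X.V, Nat.card {y : Y.V // f.onV y = x} = d

/-- The group of deck transformations of `f : Y → X`: pairs of permutations of the
vertices and of the edges of `Y` which are compatible with the graph structure and
commute with `f`. -/
def DeckGroup {Y X : Digraph'} (f : DigraphHom Y X) :
    Subgroup (Equiv.Perm Y.V × Equiv.Perm Y.E) where
  carrier := {σ | (∀ e, Y.src (σ.2 e) = σ.1 (Y.src e)) ∧
    (∀ e, Y.tgt (σ.2 e) = σ.1 (Y.tgt e)) ∧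
    (∀ v, f.onV (σ.1 v) = f.onV v) ∧ (∀ e, f.onE (σ.2 e) = f.onE e)}
  one_mem' := ⟨fun _ => rfl, fun _ => rfl, fun _ => rfl, fun _ => rfl⟩
  mul_mem' := by
    rintro σ τ ⟨h1, h2, h3, h4⟩ ⟨g1, g2, g3, g4⟩
    exact ⟨fun e => by simp [Equiv.Perm.mul_apply, h1, g1],
      fun e => by simp [Equiv.Perm.mul_apply, h2, g2],
      fun v => by simp [Equiv.Perm.mul_apply, h3, g3],
      fun e => by simp [Equiv.Perm.mul_apply, h4, g4]⟩
  inv_mem' := by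
    rintro σ ⟨h1, h2, h3, h4⟩
    refine ⟨fun e => ?_, fun e => ?_, fun v => ?_, fun e => ?_⟩
    · have := h1 (σ.2⁻¹ e)
      simp only [Equiv.Perm.inv_def, Equiv.apply_symm_apply] at this
      simp [Prod.fst_inv, Prod.snd_inv, this]
    · have := h2 (σ.2⁻¹ e)
      simp only [Equiv.Perm.inv_def, Equiv.apply_symm_apply] at this
      simp [Prod.fst_inv, Prod.snd_inv, this]
    · have := h3 (σ.1⁻¹ v)
      simp only [Equiv.Perm.inv_def, Equiv.apply_symm_apply] at this
      simp [Prod.fst_inv, this]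
    · have := h4 (σ.2⁻¹ e)
      simp only [Equiv.Perm.inv_def, Equiv.apply_symm_apply] at this
      simp [Prod.snd_inv, this]

/-- A covering is Galois if it is `d`-sheeted where `d` is the number of its deck
transformations. -/
def IsGaloisCov {Y X : Digraph'} (f : DigraphHom Y X) : Prop :=
  IsGraphCovering f ∧ ∃ d : ℕ, IsSheeted f d ∧ Nat.card ↥(DeckGroup f) = d

/-- An isomorphism of directed multigraphs. -/
structure DigraphIso (Y X : Digraph') where
  onV : Y.V ≃ X.V
  onE : Y.E ≃ X.E
  map_src : ∀ e, X.src (onE e) = onV (Y.src e)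
  map_tgt : ∀ e, X.tgt (onE e) = onV (Y.tgt e)

/-- An undirected multigraph, encoded à la Serre: every undirected edge is recorded
as a pair of mutually inverse directed edges. -/
structure SerreGraph : Type 1 extends Digraph' where
  inv : E → E
  inv_inv : ∀ e, inv (inv e) = e
  src_inv : ∀ e, src (inv e) = tgt e
  tgt_inv : ∀ e, tgt (inv e) = src e

namespace SerreGraph

variable (X : SerreGraph)

/-- The subgraph of an undirected multigraph generated by a set `S` of vertices. -/
def inducedClosed (S : Set X.V) : SerreGraph where
  V := S
  E := {e : X.E // X.src e ∈ S ∧ X.tgt e ∈ S}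
  src e := ⟨X.src e.1, e.2.1⟩
  tgt e := ⟨X.tgt e.1, e.2.2⟩
  inv e := ⟨X.inv e.1, by rw [X.src_inv, X.tgt_inv]; exact ⟨e.2.2, e.2.1⟩⟩
  inv_inv e := Subtype.ext (X.inv_inv e.1)
  src_inv e := Subtype.ext (X.src_inv e.1)
  tgt_inv e := Subtype.ext (X.tgt_inv e.1)

/-- The connected component of a vertex, as an undirected multigraph. -/
def component (v : X.V) : SerreGraph :=
  X.inducedClosed (X.toDigraph'.ComponentSet v)

end SerreGraph

/-- The undirected multigraph underlying a directed multigraph (the image of the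
directed graph under the forgetful map). -/
def Digraph'.toSerre (X : Digraph') : SerreGraph where
  V := X.V
  E := X.E × Bool
  src e := if e.2 then X.src e.1 else X.tgt e.1
  tgt e := if e.2 then X.tgt e.1 else X.src e.1
  inv e := (e.1, !e.2)
  inv_inv e := by cases e with
    | mk a b => cases b <;> rfl
  src_inv e := by cases e with
    | mk a b => cases b <;> rfl
  tgt_inv e := by cases e with
    | mk a b => cases b <;> rfl

/-- A morphism of undirected multigraphs. -/
structure SerreHom (Y X : SerreGraph) where
  onV : Y.V → X.V
  onE : Y.E → X.E
  map_src : ∀ e, X.src (onE e) = onV (Y.src e)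
  map_tgt : ∀ e, X.tgt (onE e) = onV (Y.tgt e)
  map_inv : ∀ e, X.inv (onE e) = onE (Y.inv e)

/-- The underlying morphism of directed multigraphs. -/
def SerreHom.toDigraphHom {Y X : SerreGraph} (f : SerreHom Y X) :
    DigraphHom Y.toDigraph' X.toDigraph' :=
  ⟨f.onV, f.onE, f.map_src, f.map_tgt⟩

/-- An isomorphism of undirected multigraphs. -/
structure SerreIso (Y X : SerreGraph) where
  onV : Y.V ≃ X.V
  onE : Y.E ≃ X.E
  map_src : ∀ e, X.src (onE e) = onV (Y.src e)
  map_tgt : ∀ e, X.tgt (onE e) = onV (Y.tgt e)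
  map_inv : ∀ e, X.inv (onE e) = onE (Y.inv e)

/-- The group of deck transformations of a morphism of undirected multigraphs. -/
def SerreDeckGroup {Y X : SerreGraph} (f : SerreHom Y X) :
    Subgroup (Equiv.Perm Y.V × Equiv.Perm Y.E) where
  carrier := {σ | (∀ e, Y.src (σ.2 e) = σ.1 (Y.src e)) ∧
    (∀ e, Y.tgt (σ.2 e) = σ.1 (Y.tgt e)) ∧
    (∀ e, Y.inv (σ.2 e) = σ.2 (Y.inv e)) ∧
    (∀ v, f.onV (σ.1 v) = f.onV v) ∧ (∀ e, f.onE (σ.2 e) = f.onE e)}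
  one_mem' := ⟨fun _ => rfl, fun _ => rfl, fun _ => rfl, fun _ => rfl, fun _ => rfl⟩
  mul_mem' := by
    rintro σ τ ⟨h1, h2, h3, h4, h5⟩ ⟨g1, g2, g3, g4, g5⟩
    exact ⟨fun e => by simp [Equiv.Perm.mul_apply, h1, g1],
      fun e => by simp [Equiv.Perm.mul_apply, h2, g2],
      fun e => by simp [Equiv.Perm.mul_apply, h3, g3],
      fun v => by simp [Equiv.Perm.mul_apply, h4, g4],
      fun e => by simp [Equiv.Perm.mul_apply, h5, g5]⟩
  inv_mem' := by
    rintro σ ⟨h1, h2, h3, h4, h5⟩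
    refine ⟨fun e => ?_, fun e => ?_, fun e => ?_, fun v => ?_, fun e => ?_⟩
    · have := h1 (σ.2⁻¹ e)
      simp only [Equiv.Perm.inv_def, Equiv.apply_symm_apply] at this
      simp [Prod.fst_inv, Prod.snd_inv, this]
    · have := h2 (σ.2⁻¹ e)
      simp only [Equiv.Perm.inv_def, Equiv.apply_symm_apply] at this
      simp [Prod.fst_inv, Prod.snd_inv, this]
    · have := h3 (σ.2⁻¹ e)
      simp only [Equiv.Perm.inv_def, Equiv.apply_symm_apply] at this
      simp only [Prod.snd_inv]
      rw [this]
      simp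
    · have := h4 (σ.1⁻¹ v)
      simp only [Equiv.Perm.inv_def, Equiv.apply_symm_apply] at this
      simp [Prod.fst_inv, this]
    · have := h5 (σ.2⁻¹ e)
      simp only [Equiv.Perm.inv_def, Equiv.apply_symm_apply] at this
      simp [Prod.snd_inv, this]

/-- A morphism of undirected multigraphs is a Galois covering if it is a covering
which is `d`-sheeted, where `d` is the number of its deck transformations. -/
def IsGaloisSerreCov {Y X : SerreGraph} (f : SerreHom Y X) : Prop :=
  IsGraphCovering f.toDigraphHom ∧
    ∃ d : ℕ, IsSheeted f.toDigraphHom d ∧ Nat.card ↥(SerreDeckGroup f) = d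
/-- A directed multigraph each of whose edges is colored blue (`true`) or
green (`false`). -/
structure ColoredDigraph : Type 1 extends Digraph' where
  color : E → Bool

/-- An isomorphism of edge-colored directed multigraphs. -/
structure ColoredIso (Y X : ColoredDigraph) where
  onV : Y.V ≃ X.V
  onE : Y.E ≃ X.E
  map_src : ∀ e, X.src (onE e) = onV (Y.src e)
  map_tgt : ∀ e, X.tgt (onE e) = onV (Y.tgt e)
  map_color : ∀ e, X.color (onE e) = Y.color e

/-- A directed cycle graph: a connected directed multigraph, with finitely many
vertices and edges, in which every vertex has in-degree one and out-degree one. -/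
def IsDirectedCycle (X : Digraph') : Prop :=
  X.Connected ∧ Finite X.V ∧ Finite X.E ∧
    ∀ v : X.V, Nat.card {e : X.E // X.src e = v} = 1 ∧
      Nat.card {e : X.E // X.tgt e = v} = 1

/-- An abstract tectonic crater of parameters `(r, s, t, c)`: an edge-colored
directed multigraph with `r * s * t` vertices such that at each vertex there is
exactly one blue (resp. green) edge with that vertex as source and exactly one with
it as target; starting at each vertex there is exactly one closed blue (resp. green)
path without backtracks, of length `r * s` (resp. `r * t`) -- equivalently, the
"blue successor" and "green successor" maps `b` and `g` have minimal period `r * s`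
(resp. `r * t`) at every vertex; and after every `s` steps along the blue path and
every `c * t` steps along the green path the two paths meet at a common vertex. -/
def IsTectonicCraterWith (X : ColoredDigraph) (r s t c : ℕ) : Prop :=
  Nat.card X.V = r * s * t ∧
  ∃ b g : X.V → X.V,
    (∀ v, ∃! e : X.E, X.src e = v ∧ X.color e = true) ∧
    (∀ v, ∃! e : X.E, X.tgt e = v ∧ X.color e = true) ∧
    (∀ v, ∃! e : X.E, X.src e = v ∧ X.color e = false) ∧
    (∀ v, ∃! e : X.E, X.tgt e = v ∧ X.color e = false) ∧
    (∀ e, X.color e = true → X.tgt e = b (X.src e)) ∧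
    (∀ e, X.color e = false → X.tgt e = g (X.src e)) ∧
    (∀ v, Function.minimalPeriod b v = r * s) ∧
    (∀ v, Function.minimalPeriod g v = r * t) ∧
    (∀ v, b^[s] v = g^[c * t] v)

/-- An abstract tectonic crater (of some parameters). -/
def IsAbstractTectonicCrater (X : ColoredDigraph) : Prop :=
  ∃ r s t c : ℕ, IsTectonicCraterWith X r s t c

/-- An abstract crater: either a connected directed cycle graph or a totally
disconnected finite graph. -/
def IsAbstractCrater (X : Digraph') : Prop :=
  IsDirectedCycle X ∨ (IsEmpty X.E ∧ Finite X.V)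

/-- The crater of a directed multigraph equipped with a depth function: the subgraph
generated by the vertices of depth zero. -/
def craterOf (D : Digraph') (lvl : D.V → ℕ) : Digraph' :=
  D.induced {v | lvl v = 0}

/-- The common part of the definitions of an `ℓ`-volcano and of a tectonic
`ℓ`-volcano, for a directed multigraph equipped with a depth decomposition
`V = ⊔ V_i` (encoded by the function `lvl`): every vertex has out-degree `ℓ + 1`;
an edge between `V_i` and `V_j` forces `|i - j| = 1` or `i = j = 0`; and every
vertex of depth `i ≥ 1` has exactly one edge to `V_{i-1}` and `ℓ` edges
to `V_{i+1}`. -/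
def IsVolcanoWith (D : Digraph') (ℓ : ℕ) (lvl : D.V → ℕ) : Prop :=
  (∀ v : D.V, Nat.card {e : D.E // D.src e = v} = ℓ + 1) ∧
  (∀ e : D.E, lvl (D.src e) = lvl (D.tgt e) + 1 ∨ lvl (D.tgt e) = lvl (D.src e) + 1 ∨
    (lvl (D.src e) = 0 ∧ lvl (D.tgt e) = 0)) ∧
  (∀ v : D.V, 1 ≤ lvl v →
    Nat.card {e : D.E // D.src e = v ∧ lvl (D.tgt e) + 1 = lvl v} = 1 ∧
    Nat.card {e : D.E // D.src e = v ∧ lvl (D.tgt e) = lvl v + 1} = ℓ)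

/-- An undirected `ℓ`-volcano: the image under the forgetful map of a directed
`ℓ`-volcano, i.e. of a directed multigraph with a depth decomposition satisfying
`IsVolcanoWith` and whose crater is an abstract crater. -/
def IsUndirectedVolcano (Y : SerreGraph) (ℓ : ℕ) : Prop :=
  ∃ (D : Digraph') (lvl : D.V → ℕ), IsVolcanoWith D ℓ lvl ∧
    IsAbstractCrater (craterOf D lvl) ∧ Nonempty (SerreIso D.toSerre Y)

/-- An undirected tectonic `ℓ`-volcano: the image under the forgetful map of a
directed tectonic `ℓ`-volcano, i.e. of a directed multigraph with a depth
decomposition satisfying `IsVolcanoWith` and whose crater (with a suitable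
coloring of its edges) is an abstract tectonic crater. -/
def IsUndirectedTectonicVolcano (Y : SerreGraph) (ℓ : ℕ) : Prop :=
  ∃ (D : Digraph') (lvl : D.V → ℕ), IsVolcanoWith D ℓ lvl ∧
    (∃ col : (craterOf D lvl).E → Bool,
      IsAbstractTectonicCrater ⟨craterOf D lvl, col⟩) ∧
    Nonempty (SerreIso D.toSerre Y)

/-!
The colored edges of `Y` are lifted from those of `X` through the covering, so at every vertex of
`Y` there is exactly one blue and one green edge in each direction, and the blue and green
successor maps are commuting permutations `σ, τ`. Connectedness makes the abelian group
`G = ⟨σ, τ⟩` act transitively, hence freely, on the vertices, so `|V(Y)| = |G|` and the minimal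
periods of `σ, τ` are their orders. Let `t` be the order of `τ` modulo `⟨σ⟩` and `s` that of `σ`
modulo `⟨τ⟩`. As `G / ⟨σ⟩` is cyclic generated by `τ`, Lagrange gives `|G| = ord σ · t`, and
likewise `|G| = ord τ · s`; since `s ∣ ord σ`, `r = ord σ / s` satisfies `ord σ = r s`,
`ord τ = r t`, `|G| = r s t`. Finally `σ ^ s = τ ^ k` for some `k`, and `τ ^ k ∈ ⟨σ⟩` forces
`t ∣ k`.
-/

open Function MulAction Subgroup

theorem Set.BijOn.existsUnique_mem_and {α β : Type*} {f : α → β} {s : Set α} {t : Set β}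
    (hf : Set.BijOn f s t) {p : β → Prop} (h : ∃! y, y ∈ t ∧ p y) :
    ∃! x, x ∈ s ∧ p (f x) := by
  obtain ⟨y, ⟨hyt, hpy⟩, huniq⟩ := h
  obtain ⟨x, hxs, rfl⟩ := hf.surjOn hyt
  exact ⟨x, ⟨hxs, hpy⟩, fun x' ⟨hx's, hpx'⟩ => hf.injOn hx's hxs (huniq _ ⟨hf.mapsTo hx's, hpx'⟩)⟩

namespace IsGraphCovering

variable {X Y : ColoredDigraph} {f : DigraphHom Y.toDigraph' X.toDigraph'}

theorem existsUnique_src_color (hf : IsGraphCovering f)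
    (hcolor : ∀ e, Y.color e = X.color (f.onE e)) {κ : Bool}
    (hX : ∀ x, ∃! e : X.E, X.src e = x ∧ X.color e = κ) (v : Y.V) :
    ∃! e : Y.E, Y.src e = v ∧ Y.color e = κ := by
  simpa only [Set.mem_ofPred_eq, hcolor] using (hf.2.1 v).existsUnique_mem_and (hX (f.onV v))

theorem existsUnique_tgt_color (hf : IsGraphCovering f)
    (hcolor : ∀ e, Y.color e = X.color (f.onE e)) {κ : Bool}
    (hX : ∀ x, ∃! e : X.E, X.tgt e = x ∧ X.color e = κ) (v : Y.V) :
    ∃! e : Y.E, Y.tgt e = v ∧ Y.color e = κ := by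
  simpa only [Set.mem_ofPred_eq, hcolor] using (hf.2.2 v).existsUnique_mem_and (hX (f.onV v))

end IsGraphCovering

theorem ColoredDigraph.bijective_of_existsUnique_tgt_color {Y : ColoredDigraph} {κ : Bool}
    {b : Y.V → Y.V} (hsrc : ∀ v, ∃ e, Y.src e = v ∧ Y.color e = κ)
    (htgt : ∀ v, ∃! e, Y.tgt e = v ∧ Y.color e = κ)
    (hb : ∀ e, Y.color e = κ → Y.tgt e = b (Y.src e)) :
    Bijective b := by
  refine ⟨fun v w hvw => ?_, fun w => ?_⟩
  · obtain ⟨e, rfl, he⟩ := hsrc v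
    obtain ⟨e', rfl, he'⟩ := hsrc w
    rw [(htgt _).unique ⟨hb e he, he⟩ ⟨(hb e' he').trans hvw.symm, he'⟩]
  · obtain ⟨e, rfl, he⟩ := (htgt w).exists
    exact ⟨Y.src e, (hb e he).symm⟩

theorem Digraph'.isPretransitive_of_connected {X : Digraph'} {G : Type*} [Group G]
    [MulAction G X.V] (hX : X.Connected) (hstep : ∀ e, ∃ g : G, g • X.src e = X.tgt e) :
    IsPretransitive G X.V := by
  refine ⟨fun v w => mem_orbit_symm.mp (Setoid.eqvGen_le (s := orbitRel G X.V) ?_ (hX v w))⟩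
  rintro _ _ ⟨e, rfl, rfl⟩
  exact mem_orbit_symm.mp (hstep e)

namespace MulAction

variable {G α : Type*} [Group G] [MulAction G α]

theorem IsPretransitive.isCancelSMul [IsMulCommutative G] [FaithfulSMul G α]
    [IsPretransitive G α] : IsCancelSMul G α := by
  refine isCancelSMul_iff_eq_one_of_smul_eq.mpr fun g x hgx =>
    eq_of_smul_eq_smul (α := α) fun y => ?_
  obtain ⟨h, rfl⟩ := MulAction.exists_smul_eq G x y
  rw [one_smul, smul_smul, mul_comm' g h, mul_smul, hgx]

variable [IsCancelSMul G α]

theorem natCard_eq_natCard_group [IsPretransitive G α] (x : α) : Nat.card α = Nat.card G :=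
  (Nat.card_eq_of_bijective (· • x)
    ⟨fun g h hgh => IsCancelSMul.right_cancel g h x hgh, fun y => exists_smul_eq G x y⟩).symm

theorem minimalPeriod_smul_eq_orderOf (g : G) (x : α) :
    minimalPeriod (g • ·) x = orderOf g := by
  refine Nat.dvd_antisymm (period_dvd_orderOf g x) (orderOf_dvd_of_pow_eq_one ?_)
  exact IsCancelSMul.eq_one_of_smul (pow_smul_eq_iff_minimalPeriod_dvd.mpr dvd_rfl)

end MulAction

section TectonicParameters

variable {G : Type*} [CommGroup G] {a b : G}

theorem natCard_eq_orderOf_mul_orderOf_mk (hgen : closure {a, b} = ⊤) :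
    Nat.card G = orderOf a * orderOf (b : G ⧸ zpowers a) := by
  have hcyc : ∀ q : G ⧸ zpowers a, q ∈ zpowers (b : G ⧸ zpowers a) := by
    intro q
    obtain ⟨g, rfl⟩ := QuotientGroup.mk_surjective q
    obtain ⟨i, j, rfl⟩ := mem_closure_pair.mp (hgen ▸ mem_top g)
    refine ⟨j, ?_⟩
    rw [QuotientGroup.mk_mul, QuotientGroup.mk_zpow, QuotientGroup.mk_zpow,
      (QuotientGroup.eq_one_iff a).mpr (mem_zpowers a), one_zpow, one_mul]
  rw [← card_mul_index (zpowers a), Nat.card_zpowers, index_eq_card,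
    orderOf_eq_card_of_forall_mem_zpowers hcyc]

theorem exists_tectonic_parameters_of_closure_eq_top [Finite G] (hgen : closure {a, b} = ⊤) :
    ∃ r s t c : ℕ, Nat.card G = r * s * t ∧ orderOf a = r * s ∧ orderOf b = r * t ∧
      a ^ s = b ^ (c * t) := by
  set s := orderOf (a : G ⧸ zpowers b)
  set t := orderOf (b : G ⧸ zpowers a)
  have hcard_a : Nat.card G = orderOf a * t := natCard_eq_orderOf_mul_orderOf_mk hgen
  have hcard_b : Nat.card G = orderOf b * s :=
    natCard_eq_orderOf_mul_orderOf_mk (by rwa [Set.pair_comm])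
  have hs_dvd : s ∣ orderOf a := orderOf_dvd_of_pow_eq_one (by
    rw [← QuotientGroup.mk_pow, pow_orderOf_eq_one, QuotientGroup.mk_one])
  obtain ⟨r, hr⟩ := hs_dvd
  have hs_pos : 0 < s := orderOf_pos _
  have hrt : orderOf b = r * t := by
    apply Nat.eq_of_mul_eq_mul_right hs_pos
    rw [← hcard_b, hcard_a, hr]
    ring
  have has_mem : a ^ s ∈ zpowers b := by
    rw [← QuotientGroup.eq_one_iff, QuotientGroup.mk_pow, pow_orderOf_eq_one]
  obtain ⟨k, hk : b ^ k = a ^ s⟩ := mem_powers_iff_mem_zpowers.mpr has_mem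
  obtain ⟨c, rfl⟩ : t ∣ k := orderOf_dvd_of_pow_eq_one (by
    rw [← QuotientGroup.mk_pow, hk, QuotientGroup.eq_one_iff]
    exact pow_mem (mem_zpowers a) s)
  exact ⟨r, s, t, c, by rw [hcard_a, hr, mul_comm s r], by rw [hr, mul_comm], hrt,
    by rw [← hk, mul_comm]⟩

end TectonicParameters

open scoped IsMulCommutative in
theorem Equiv.Perm.exists_tectonic_parameters_of_commute {V : Type*} [Finite V]
    {σ τ : Equiv.Perm V} (hcomm : Commute σ τ) [IsPretransitive (closure {σ, τ}) V] :
    ∃ r s t c : ℕ, Nat.card V = r * s * t ∧ (∀ v, minimalPeriod σ v = r * s) ∧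
      (∀ v, minimalPeriod τ v = r * t) ∧ ∀ v, σ^[s] v = τ^[c * t] v := by
  rcases isEmpty_or_nonempty V with hV | hV
  · exact ⟨0, 0, 0, 0, by simp, isEmptyElim, isEmptyElim, isEmptyElim⟩
  obtain ⟨v₀⟩ := hV
  have := isMulCommutative_closure (k := {σ, τ}) (by
    rintro x (rfl | rfl) y (rfl | rfl) <;> first | rfl | exact hcomm.eq | exact hcomm.symm.eq)
  have := IsPretransitive.isCancelSMul (G := closure {σ, τ}) (α := V)
  let a : closure {σ, τ} := ⟨σ, subset_closure (by simp)⟩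
  let b : closure {σ, τ} := ⟨τ, subset_closure (by simp)⟩
  have hgen : closure {a, b} = ⊤ := by
    convert closure_closure_coe_preimage (k := {σ, τ}) using 2
    ext x
    simp [a, b, Subtype.ext_iff]
  obtain ⟨r, s, t, c, hcard, ha, hb, hab⟩ := exists_tectonic_parameters_of_closure_eq_top hgen
  refine ⟨r, s, t, c, natCard_eq_natCard_group (G := closure {σ, τ}) v₀ ▸ hcard,
    fun v => ?_, fun v => ?_, fun v => ?_⟩
  · exact (minimalPeriod_smul_eq_orderOf a v).trans ha
  · exact (minimalPeriod_smul_eq_orderOf b v).trans hb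
  · rw [Equiv.Perm.iterate_eq_pow, Equiv.Perm.iterate_eq_pow]
    exact congrArg (fun g : closure {σ, τ} => (g : Equiv.Perm V) v) hab

theorem galois_cover_of_tectonic_crater_isTectonicCrater_general
    (X Y : ColoredDigraph)
    (hYV : Finite Y.V)
    (hYconn : Y.toDigraph'.Connected)
    (f : DigraphHom Y.toDigraph' X.toDigraph')
    (hcolor : ∀ e, Y.color e = X.color (f.onE e))
    (hgal : IsGaloisCov f)
    (hX : IsAbstractTectonicCrater X)
    (bY gY : Y.V → Y.V)
    (hb : ∀ e : Y.E, Y.color e = true → Y.tgt e = bY (Y.src e))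
    (hg : ∀ e : Y.E, Y.color e = false → Y.tgt e = gY (Y.src e))
    (hcomm : bY ∘ gY = gY ∘ bY) :
    IsAbstractTectonicCrater Y := by
  obtain ⟨-, -, -, -, -, -, -, hXbs, hXbt, hXgs, hXgt, -⟩ := hX
  have hbs := hgal.1.existsUnique_src_color hcolor hXbs
  have hbt := hgal.1.existsUnique_tgt_color hcolor hXbt
  have hgs := hgal.1.existsUnique_src_color hcolor hXgs
  have hgt := hgal.1.existsUnique_tgt_color hcolor hXgt
  let σ := Equiv.ofBijective bY
    (ColoredDigraph.bijective_of_existsUnique_tgt_color (fun v => (hbs v).exists) hbt hb)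
  let τ := Equiv.ofBijective gY
    (ColoredDigraph.bijective_of_existsUnique_tgt_color (fun v => (hgs v).exists) hgt hg)
  have : IsPretransitive (closure {σ, τ}) Y.V :=
    Digraph'.isPretransitive_of_connected hYconn fun e => by
      cases hcol : Y.color e
      · exact ⟨⟨τ, subset_closure (by simp)⟩, (hg e hcol).symm⟩
      · exact ⟨⟨σ, subset_closure (by simp)⟩, (hb e hcol).symm⟩
  obtain ⟨r, s, t, c, hcard, hσ, hτ, hmeet⟩ :=
    Equiv.Perm.exists_tectonic_parameters_of_commute (σ := σ) (τ := τ)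
      (Equiv.ext (congrFun hcomm))
  exact ⟨r, s, t, c, hcard, bY, gY, hbs, hbt, hgs, hgt, hb, hg, hσ, hτ, hmeet⟩

/-- **Lemma (Galois coverings of abstract tectonic craters).**
Let `X` be an abstract tectonic crater and let `f : Y → X` be a Galois covering of
finite connected graphs.  Color each edge `e` of `Y` by the color of `f e`; then at
each vertex `v` of `Y` there is exactly one blue (resp. green) edge with source `v`,
and `bY v` (resp. `gY v`) denotes its target.  If `bY ∘ gY = gY ∘ bY`, then `Y` is
an abstract tectonic crater. -/
theorem galois_cover_of_tectonic_crater_isTectonicCrater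
    (X Y : ColoredDigraph)
    (hXV : Finite X.V) (hXE : Finite X.E) (hYV : Finite Y.V) (hYE : Finite Y.E)
    (hXconn : X.toDigraph'.Connected) (hYconn : Y.toDigraph'.Connected)
    (f : DigraphHom Y.toDigraph' X.toDigraph')
    (hcolor : ∀ e, Y.color e = X.color (f.onE e))
    (hgal : IsGaloisCov f)
    (hX : IsAbstractTectonicCrater X)
    (bY gY : Y.V → Y.V)
    (hbEx : ∀ v, ∃ e : Y.E, Y.src e = v ∧ Y.color e = true)
    (hb : ∀ e : Y.E, Y.color e = true → Y.tgt e = bY (Y.src e))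
    (hgEx : ∀ v, ∃ e : Y.E, Y.src e = v ∧ Y.color e = false)
    (hg : ∀ e : Y.E, Y.color e = false → Y.tgt e = gY (Y.src e))
    (hcomm : bY ∘ gY = gY ∘ bY) :
    IsAbstractTectonicCrater Y :=
  galois_cover_of_tectonic_crater_isTectonicCrater_general X Y hYV hYconn f hcolor hgal hX bY gY hb
    hg hcomm
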